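/- Let G and G' be two vertex-disjoint graphs, each with at least two vertices, let v be a vertex of G and v' a vertex of G', and let G'' be the graph obtained from the disjoint union of G and G' by adding the edge vv'. For a set S'' of vertices of G'': S'' is a type I set for v' in G'' with L_{S''}(v') = −2 if and only if S'' = S ∪ S' where S = S'' ∩ V(G) is a type I set for v in G, S' = S'' ∩ V(G') is a type I set for v' in G', and the pair (L_S(v), L_{S'}(v')) belongs to {(1,−2), (2,−2), (2,−1)}. -/

import Mathlib

/-- A set of vertices is independent: no two of its vertices are adjacent. -/
def IndepSet {V : Type*} (G : SimpleGraph V) (S : Set V) : Prop :=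
  ∀ u ∈ S, ∀ w ∈ S, ¬ G.Adj u w

/-- `S` is a type I set for `v` in `G`: `S` is independent, every vertex
`u ∉ S ∪ {v}` has at least one and at most two neighbors in `S`, and `v` either
belongs to `S` or has at most two neighbors in `S`. -/
def TypeISet {V : Type*} (G : SimpleGraph V) (v : V) (S : Set V) : Prop :=
  IndepSet G S ∧
    (∀ u, u ∉ S → u ≠ v →
      1 ≤ (S ∩ G.neighborSet u).ncard ∧ (S ∩ G.neighborSet u).ncard ≤ 2) ∧
    (v ∈ S ∨ (S ∩ G.neighborSet v).ncard ≤ 2)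

/-- The labeling `L_S(v) = l` : `0` if `v ∈ S`; `k ≥ 1` if `v ∉ S` and `v` has exactly
`k` neighbors in `S`; `-1` if `N[v] ∩ S = ∅` and every neighbor of `v` has exactly one
neighbor in `S`; `-2` if `N[v] ∩ S = ∅` and some neighbor of `v` has exactly two
neighbors in `S`. -/
def HasLabel {V : Type*} (G : SimpleGraph V) (v : V) (S : Set V) (l : ℤ) : Prop :=
  (v ∈ S ∧ l = 0) ∨
  (v ∉ S ∧ ∃ k : ℕ, 1 ≤ k ∧ (S ∩ G.neighborSet v).ncard = k ∧ l = (k : ℤ)) ∨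
  (v ∉ S ∧ S ∩ G.neighborSet v = ∅ ∧
    (∀ u ∈ G.neighborSet v, (S ∩ G.neighborSet u).ncard = 1) ∧ l = -1) ∨
  (v ∉ S ∧ S ∩ G.neighborSet v = ∅ ∧
    (∃ u ∈ G.neighborSet v, (S ∩ G.neighborSet u).ncard = 2) ∧ l = -2)

/-- The star `K_{1,r}` with center `none` and the `r` leaves `some i`. -/
def starGraph (r : ℕ) : SimpleGraph (Option (Fin r)) where
  Adj a b := (a = none ∧ b ≠ none) ∨ (a ≠ none ∧ b = none)
  symm := ⟨by intro a b h; tauto⟩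
  loopless := ⟨by intro a h; tauto⟩

/-- The graph obtained from `G` by adding a new vertex `none` adjacent only to `v`. -/
def addLeaf {V : Type*} (G : SimpleGraph V) (v : V) : SimpleGraph (Option V) where
  Adj a b := match a, b with
    | some x, some y => G.Adj x y
    | none, some y => y = v
    | some x, none => x = v
    | none, none => False
  symm := ⟨by
    intro a b h
    match a, b with
    | some x, some y => exact h.symm
    | none, some y => exact h
    | some x, none => exact h
    | none, none => exact h⟩
  loopless := ⟨by
    intro a h
    match a with
    | some x => exact G.irrefl h
    | none => exact h⟩

/-- The graph obtained from the disjoint union of `G` and `H` by adding the edge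
between `v` (in `G`) and `v'` (in `H`). -/
def joinAt {V W : Type*} (G : SimpleGraph V) (H : SimpleGraph W) (v : V) (v' : W) :
    SimpleGraph (V ⊕ W) where
  Adj a b := match a, b with
    | Sum.inl x, Sum.inl y => G.Adj x y
    | Sum.inr x, Sum.inr y => H.Adj x y
    | Sum.inl x, Sum.inr y => x = v ∧ y = v'
    | Sum.inr x, Sum.inl y => x = v' ∧ y = v
  symm := ⟨by
    intro a b h
    match a, b with
    | Sum.inl x, Sum.inl y => exact h.symm
    | Sum.inr x, Sum.inr y => exact h.symm
    | Sum.inl x, Sum.inr y => exact ⟨h.2, h.1⟩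
    | Sum.inr x, Sum.inl y => exact ⟨h.2, h.1⟩⟩
  loopless := ⟨by
    intro a h
    match a with
    | Sum.inl x => exact G.irrefl h
    | Sum.inr x => exact H.irrefl h⟩

/-!
Once `L_{S''}(v') = -2`, neither `v` nor `v'` lies in `S''`, so the new edge `vv'` joins two
vertices outside `S''`: it does not affect independence, and every vertex keeps its number of
neighbors in `S''` from its own side, except `v'`, which gains nothing from `v`. Hence `S''` is a
type I set for `v'` exactly when its two traces are type I sets and `v` has a neighbor in `S`.
The witness of the label `-2` is either `v` (then `L_S(v) = 2`) or a neighbor of `v'` in `G'` with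
two neighbors in `S'` (then `L_{S'}(v') = -2`); with `L_S(v) ∈ {1, 2}` this is the listed table.
-/

section Label

variable {V : Type*} {G : SimpleGraph V} {v : V} {S : Set V}

lemma hasLabel_iff_of_one_le {l : ℤ} (hl : 1 ≤ l) :
    HasLabel G v S l ↔ v ∉ S ∧ ((S ∩ G.neighborSet v).ncard : ℤ) = l := by
  constructor
  · rintro (⟨-, rfl⟩ | ⟨hv, k, -, hk, rfl⟩ | ⟨-, -, -, rfl⟩ | ⟨-, -, -, rfl⟩)
    · omega
    · exact ⟨hv, by rw [hk]⟩
    · omega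
    · omega
  · rintro ⟨hv, hk⟩
    exact Or.inr (Or.inl ⟨hv, _, by omega, rfl, hk.symm⟩)

lemma hasLabel_neg_two_iff :
    HasLabel G v S (-2) ↔ v ∉ S ∧ S ∩ G.neighborSet v = ∅ ∧
      ∃ u ∈ G.neighborSet v, (S ∩ G.neighborSet u).ncard = 2 := by
  constructor
  · rintro (⟨-, h⟩ | ⟨-, k, hk, -, h⟩ | ⟨-, -, -, h⟩ | ⟨hv, hN, hu, -⟩)
    · omega
    · omega
    · omega
    · exact ⟨hv, hN, hu⟩
  · rintro ⟨hv, hN, hu⟩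
    exact Or.inr (Or.inr (Or.inr ⟨hv, hN, hu, rfl⟩))

/-- The neighbors of `v` lie outside `S ∪ {v}`, so they have one or two neighbors in `S`. -/
lemma TypeISet.hasLabel_neg_one_iff (hS : TypeISet G v S) :
    HasLabel G v S (-1) ↔ v ∉ S ∧ S ∩ G.neighborSet v = ∅ ∧
      ¬∃ u ∈ G.neighborSet v, (S ∩ G.neighborSet u).ncard = 2 := by
  constructor
  · rintro (⟨-, h⟩ | ⟨-, k, hk, -, h⟩ | ⟨hv, hN, hu, -⟩ | ⟨-, -, -, h⟩)
    · omega
    · omega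
    · exact ⟨hv, hN, fun ⟨u, hvu, h2⟩ => by simp [hu u hvu] at h2⟩
    · omega
  · rintro ⟨hv, hN, hu⟩
    refine Or.inr (Or.inr (Or.inl ⟨hv, hN, fun u hvu => ?_, rfl⟩))
    have huS : u ∉ S := fun h => Set.eq_empty_iff_forall_notMem.1 hN u ⟨h, hvu⟩
    have h12 := hS.2.1 u huS (G.ne_of_adj hvu).symm
    have h2 : (S ∩ G.neighborSet u).ncard ≠ 2 := fun h => hu ⟨u, hvu, h⟩
    omega

lemma hasLabel_pair_mem_iff {W : Type*} {G' : SimpleGraph W} {v' : W} {S' : Set W}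
    (hS : TypeISet G v S) (hS' : TypeISet G' v' S') :
    ((HasLabel G v S 1 ∧ HasLabel G' v' S' (-2)) ∨
        (HasLabel G v S 2 ∧ HasLabel G' v' S' (-2)) ∨
        (HasLabel G v S 2 ∧ HasLabel G' v' S' (-1))) ↔
      v ∉ S ∧ v' ∉ S' ∧ S' ∩ G'.neighborSet v' = ∅ ∧ 1 ≤ (S ∩ G.neighborSet v).ncard ∧
        ((S ∩ G.neighborSet v).ncard = 2 ∨
          ∃ u ∈ G'.neighborSet v', (S' ∩ G'.neighborSet u).ncard = 2) := by
  rw [hasLabel_iff_of_one_le le_rfl, hasLabel_iff_of_one_le one_le_two, hasLabel_neg_two_iff,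
    hS'.hasLabel_neg_one_iff]
  have hv := hS.2.2
  grind

end Label

section JoinAt

variable {V W : Type*} {G : SimpleGraph V} {G' : SimpleGraph W} {v : V} {v' : W}

@[simp] lemma joinAt_adj_inl_inl {x y : V} :
    (joinAt G G' v v').Adj (Sum.inl x) (Sum.inl y) ↔ G.Adj x y := Iff.rfl

@[simp] lemma joinAt_adj_inr_inr {x y : W} :
    (joinAt G G' v v').Adj (Sum.inr x) (Sum.inr y) ↔ G'.Adj x y := Iff.rfl

@[simp] lemma joinAt_adj_inl_inr {x : V} {y : W} :
    (joinAt G G' v v').Adj (Sum.inl x) (Sum.inr y) ↔ x = v ∧ y = v' := Iff.rfl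

@[simp] lemma joinAt_adj_inr_inl {x : W} {y : V} :
    (joinAt G G' v v').Adj (Sum.inr x) (Sum.inl y) ↔ x = v' ∧ y = v := Iff.rfl

variable {S'' : Set (V ⊕ W)}

lemma indepSet_joinAt_iff (h : Sum.inl v ∉ S'' ∨ Sum.inr v' ∉ S'') :
    IndepSet (joinAt G G' v v') S'' ↔
      IndepSet G (Sum.inl ⁻¹' S'') ∧ IndepSet G' (Sum.inr ⁻¹' S'') := by
  simp only [IndepSet, Sum.forall, Set.mem_preimage, joinAt_adj_inl_inl, joinAt_adj_inr_inr,
    joinAt_adj_inl_inr, joinAt_adj_inr_inl]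
  grind

lemma inter_neighborSet_joinAt_inl {u : V} (h : u ≠ v ∨ Sum.inr v' ∉ S'') :
    S'' ∩ (joinAt G G' v v').neighborSet (Sum.inl u) =
      Sum.inl '' (Sum.inl ⁻¹' S'' ∩ G.neighborSet u) := by
  ext (x | y)
  · simp
  · simp only [Set.mem_inter_iff, SimpleGraph.mem_neighborSet, joinAt_adj_inl_inr, Set.mem_image,
      reduceCtorEq, and_false, exists_false, iff_false, not_and]
    rintro hy rfl rfl
    tauto

lemma inter_neighborSet_joinAt_inr {u : W} (h : u ≠ v' ∨ Sum.inl v ∉ S'') :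
    S'' ∩ (joinAt G G' v v').neighborSet (Sum.inr u) =
      Sum.inr '' (Sum.inr ⁻¹' S'' ∩ G'.neighborSet u) := by
  ext (x | y)
  · simp only [Set.mem_inter_iff, SimpleGraph.mem_neighborSet, joinAt_adj_inr_inl, Set.mem_image,
      reduceCtorEq, and_false, exists_false, iff_false, not_and]
    rintro hx rfl rfl
    tauto
  · simp

lemma ncard_inter_neighborSet_joinAt_inl {u : V} (h : u ≠ v ∨ Sum.inr v' ∉ S'') :
    (S'' ∩ (joinAt G G' v v').neighborSet (Sum.inl u)).ncard =
      (Sum.inl ⁻¹' S'' ∩ G.neighborSet u).ncard := by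
  rw [inter_neighborSet_joinAt_inl h, Set.ncard_image_of_injective _ Sum.inl_injective]

lemma ncard_inter_neighborSet_joinAt_inr {u : W} (h : u ≠ v' ∨ Sum.inl v ∉ S'') :
    (S'' ∩ (joinAt G G' v v').neighborSet (Sum.inr u)).ncard =
      (Sum.inr ⁻¹' S'' ∩ G'.neighborSet u).ncard := by
  rw [inter_neighborSet_joinAt_inr h, Set.ncard_image_of_injective _ Sum.inr_injective]

lemma inter_neighborSet_joinAt_inr_self_eq_empty_iff :
    S'' ∩ (joinAt G G' v v').neighborSet (Sum.inr v') = ∅ ↔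
      Sum.inl v ∉ S'' ∧ Sum.inr ⁻¹' S'' ∩ G'.neighborSet v' = ∅ := by
  simp only [Set.eq_empty_iff_forall_notMem, Sum.forall, Set.mem_inter_iff, Set.mem_preimage,
    SimpleGraph.mem_neighborSet, joinAt_adj_inr_inl, joinAt_adj_inr_inr]
  grind

lemma typeISet_joinAt_iff (hv : Sum.inl v ∉ S'') (hv' : Sum.inr v' ∉ S'') :
    TypeISet (joinAt G G' v v') (Sum.inr v') S'' ↔
      TypeISet G v (Sum.inl ⁻¹' S'') ∧ TypeISet G' v' (Sum.inr ⁻¹' S'') ∧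
        1 ≤ (Sum.inl ⁻¹' S'' ∩ G.neighborSet v).ncard := by
  have hl (u : V) := ncard_inter_neighborSet_joinAt_inl (G := G) (G' := G') (v := v) (u := u)
    (Or.inr hv')
  have hr (u : W) := ncard_inter_neighborSet_joinAt_inr (G := G) (G' := G') (v' := v') (u := u)
    (Or.inr hv)
  simp only [TypeISet, indepSet_joinAt_iff (Or.inl hv), Sum.forall, hl, hr, Set.mem_preimage,
    ne_eq, reduceCtorEq, not_false_eq_true, Sum.inr.injEq, forall_const, hv', hv, false_or]
  grind

lemma hasLabel_joinAt_inr_self_neg_two_iff :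
    HasLabel (joinAt G G' v v') (Sum.inr v') S'' (-2) ↔
      Sum.inl v ∉ S'' ∧ Sum.inr v' ∉ S'' ∧ Sum.inr ⁻¹' S'' ∩ G'.neighborSet v' = ∅ ∧
        ((Sum.inl ⁻¹' S'' ∩ G.neighborSet v).ncard = 2 ∨
          ∃ u ∈ G'.neighborSet v', (Sum.inr ⁻¹' S'' ∩ G'.neighborSet u).ncard = 2) := by
  rw [hasLabel_neg_two_iff, inter_neighborSet_joinAt_inr_self_eq_empty_iff]
  constructor
  · rintro ⟨hv', ⟨hv, hN⟩, (u | u), hu, h2⟩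
    · obtain ⟨-, rfl⟩ := hu
      exact ⟨hv, hv', hN, Or.inl (by rwa [ncard_inter_neighborSet_joinAt_inl (Or.inr hv')] at h2)⟩
    · refine ⟨hv, hv', hN, Or.inr ⟨u, hu, ?_⟩⟩
      rwa [ncard_inter_neighborSet_joinAt_inr (Or.inl (G'.ne_of_adj hu).symm)] at h2
  · rintro ⟨hv, hv', hN, h2 | ⟨u, hu, h2⟩⟩
    · refine ⟨hv', ⟨hv, hN⟩, Sum.inl v, ⟨rfl, rfl⟩, ?_⟩
      rwa [ncard_inter_neighborSet_joinAt_inl (Or.inr hv')]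
    · refine ⟨hv', ⟨hv, hN⟩, Sum.inr u, hu, ?_⟩
      rwa [ncard_inter_neighborSet_joinAt_inr (Or.inl (G'.ne_of_adj hu).symm)]

end JoinAt

theorem statement15_general {V W : Type*} (G : SimpleGraph V) (G' : SimpleGraph W) (v : V) (v' : W)
    (S'' : Set (V ⊕ W)) :
    (TypeISet (joinAt G G' v v') (Sum.inr v') S'' ∧
        HasLabel (joinAt G G' v v') (Sum.inr v') S'' (-2)) ↔
      ∃ (S : Set V) (S' : Set W), S = Sum.inl ⁻¹' S'' ∧ S' = Sum.inr ⁻¹' S'' ∧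
        S'' = Sum.inl '' S ∪ Sum.inr '' S' ∧ TypeISet G v S ∧ TypeISet G' v' S' ∧
        ((HasLabel G v S 1 ∧ HasLabel G' v' S' (-2)) ∨
         (HasLabel G v S 2 ∧ HasLabel G' v' S' (-2)) ∨
         (HasLabel G v S 2 ∧ HasLabel G' v' S' (-1))) := by
  constructor
  · rintro ⟨hT, hL⟩
    obtain ⟨hv, hv', hN, h2⟩ := hasLabel_joinAt_inr_self_neg_two_iff.1 hL
    obtain ⟨hS, hS', h1⟩ := (typeISet_joinAt_iff hv hv').1 hT
    exact ⟨_, _, rfl, rfl, (Set.image_preimage_inl_union_image_preimage_inr S'').symm, hS, hS',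
      (hasLabel_pair_mem_iff hS hS').2 ⟨hv, hv', hN, h1, h2⟩⟩
  · rintro ⟨S, S', rfl, rfl, -, hS, hS', hL⟩
    obtain ⟨hv, hv', hN, h1, h2⟩ := (hasLabel_pair_mem_iff hS hS').1 hL
    exact ⟨(typeISet_joinAt_iff hv hv').2 ⟨hS, hS', h1⟩,
      hasLabel_joinAt_inr_self_neg_two_iff.2 ⟨hv, hv', hN, h2⟩⟩

theorem statement15 {V W : Type*} [Fintype V] [Fintype W] [Nontrivial V]
    [Nontrivial W] (G : SimpleGraph V) (G' : SimpleGraph W) (v : V) (v' : W)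
    (S'' : Set (V ⊕ W)) :
    (TypeISet (joinAt G G' v v') (Sum.inr v') S'' ∧
        HasLabel (joinAt G G' v v') (Sum.inr v') S'' (-2)) ↔
      ∃ (S : Set V) (S' : Set W), S = Sum.inl ⁻¹' S'' ∧ S' = Sum.inr ⁻¹' S'' ∧
        S'' = Sum.inl '' S ∪ Sum.inr '' S' ∧ TypeISet G v S ∧ TypeISet G' v' S' ∧
        ((HasLabel G v S 1 ∧ HasLabel G' v' S' (-2)) ∨
         (HasLabel G v S 2 ∧ HasLabel G' v' S' (-2)) ∨
         (HasLabel G v S 2 ∧ HasLabel G' v' S' (-1))) :=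
  statement15_general G G' v v' S''
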